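/- (Jackknife+ predictive interval endpoints under linear least squares.) With the setup of leave-one-out least squares, for the combined dataset including a test point x_{new}, the quantity ŷ_{new}^{-(i,new)} + (y_i - ŷ_i^{-(i,new)}) equals x_{new}ᵀβ̂ + (1 - h_{i,new}) u_i, where u_i = (y_i - x_iᵀβ̂)/(1 - h_{ii}) is the deleted residual and h_{i,new} = x_{new}ᵀ(XᵀX)⁻¹x_i, where β̂ is the full-data least squares estimator. -/

import Mathlib

/-!
Removing observation `i` replaces `XᵀX` by the rank-one downdate `XᵀX - x_i x_iᵀ`, which is
invertible because its determinant is `det (XᵀX) * (1 - h_ii)` (matrix determinant lemma).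
By Sherman–Morrison its least squares coefficient is `β̂ - u_i (XᵀX)⁻¹ x_i`, so every
leave-one-out prediction is `vᵀβ̂ - u_i vᵀ(XᵀX)⁻¹x_i`; the claim is then linear algebra in
the scalars `h_ii`, `h_{i,new}`, `u_i`, using `y_i - x_iᵀβ̂ = (1 - h_ii) u_i`.
-/

open Matrix

section LeaveOneOut

variable {K ι : Type*} [Field K] [Fintype ι] [DecidableEq ι]

theorem Matrix.det_sub_vecMulVec {A : Matrix ι ι K} (hA : IsUnit A.det) (x y : ι → K) :
    (A - vecMulVec x y).det = A.det * (1 - y ⬝ᵥ (A⁻¹ *ᵥ x)) := by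
  rw [sub_eq_add_neg, ← neg_vecMulVec, vecMulVec_eq Unit, det_add_replicateCol_mul_replicateRow hA,
    det_unique (n := Unit), Matrix.mul_assoc, ← replicateCol_mulVec, add_apply, one_apply_eq,
    replicateRow_mul_replicateCol_apply, mulVec_neg, dotProduct_neg, ← sub_eq_add_neg]

theorem Matrix.isUnit_det_sub_vecMulVec {A : Matrix ι ι K} (hA : IsUnit A.det) {x y : ι → K}
    (hxy : y ⬝ᵥ (A⁻¹ *ᵥ x) ≠ 1) : IsUnit (A - vecMulVec x y).det := by
  rw [det_sub_vecMulVec hA, isUnit_iff_ne_zero]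
  exact mul_ne_zero (isUnit_iff_ne_zero.mp hA) (sub_ne_zero.mpr hxy.symm)

theorem Matrix.inv_sub_vecMulVec_mulVec_sub_smul {A : Matrix ι ι K} (hA : IsUnit A.det)
    {x y : ι → K} (hxy : y ⬝ᵥ (A⁻¹ *ᵥ x) ≠ 1) (b : ι → K) (c : K) :
    (A - vecMulVec x y)⁻¹ *ᵥ (b - c • x) =
      A⁻¹ *ᵥ b - ((c - y ⬝ᵥ (A⁻¹ *ᵥ b)) / (1 - y ⬝ᵥ (A⁻¹ *ᵥ x))) • (A⁻¹ *ᵥ x) := by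
  set u := (c - y ⬝ᵥ (A⁻¹ *ᵥ b)) / (1 - y ⬝ᵥ (A⁻¹ *ᵥ x))
  have hu : u * (1 - y ⬝ᵥ (A⁻¹ *ᵥ x)) = c - y ⬝ᵥ (A⁻¹ *ᵥ b) :=
    div_mul_cancel₀ _ (sub_ne_zero.mpr hxy.symm)
  suffices h : (A - vecMulVec x y) *ᵥ (A⁻¹ *ᵥ b - u • (A⁻¹ *ᵥ x)) = b - c • x by
    rw [← h, mulVec_mulVec, nonsing_inv_mul _ (isUnit_det_sub_vecMulVec hA hxy), one_mulVec]
  have hAA : ∀ v, A *ᵥ (A⁻¹ *ᵥ v) = v := fun v => by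
    rw [mulVec_mulVec, mul_nonsing_inv _ hA, one_mulVec]
  rw [sub_mulVec, vecMulVec_mulVec, mulVec_sub, mulVec_smul, hAA, hAA, dotProduct_sub,
    dotProduct_smul, smul_eq_mul, op_smul_eq_smul, sub_sub, ← add_smul]
  congr 2
  linear_combination hu

end LeaveOneOut

theorem stmt_5_general (n p : ℕ) (X : Matrix (Fin n) (Fin p) ℝ) (Y : Fin n → ℝ)
    (hinv : IsUnit (Xᵀ * X).det) (i : Fin n)
    (hii_lt : X i ⬝ᵥ ((Xᵀ * X)⁻¹ *ᵥ X i) < 1)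
    (xnew : Fin p → ℝ) :
    let yhat : (Fin p → ℝ) → ℝ := fun v =>
      v ⬝ᵥ ((Xᵀ * X - vecMulVec (X i) (X i))⁻¹ *ᵥ (Xᵀ *ᵥ Y - Y i • X i))
    let βhat : Fin p → ℝ := (Xᵀ * X)⁻¹ *ᵥ (Xᵀ *ᵥ Y)
    let hii : ℝ := X i ⬝ᵥ ((Xᵀ * X)⁻¹ *ᵥ X i)
    let hinew : ℝ := xnew ⬝ᵥ ((Xᵀ * X)⁻¹ *ᵥ X i)
    let u : ℝ := (Y i - X i ⬝ᵥ βhat) / (1 - hii)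
    yhat xnew + (Y i - yhat (X i)) = xnew ⬝ᵥ βhat + (1 - hinew) * u := by
  intro yhat βhat hii hinew u
  have hyhat (v : Fin p → ℝ) : yhat v = v ⬝ᵥ βhat - u * v ⬝ᵥ ((Xᵀ * X)⁻¹ *ᵥ X i) := by
    simp only [yhat, inv_sub_vecMulVec_mulVec_sub_smul hinv hii_lt.ne, dotProduct_sub,
      dotProduct_smul, smul_eq_mul]
    rfl
  have hu : u * (1 - hii) = Y i - X i ⬝ᵥ βhat := div_mul_cancel₀ _ (sub_ne_zero.mpr hii_lt.ne')
  rw [hyhat, hyhat]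
  linear_combination -hu

/-- Jackknife+ interval endpoints under linear least squares:
`ŷ_{new}^{-(i,new)} + (y_i - ŷ_i^{-(i,new)}) = x_{new}ᵀβ̂ + (1 - h_{i,new}) u_i`,
where `u_i` is the deleted residual and `β̂` the full-data least squares estimator. -/
theorem stmt_5 (n p : ℕ) (X : Matrix (Fin n) (Fin p) ℝ) (Y : Fin n → ℝ)
    (hinv : IsUnit (Xᵀ * X).det) (i : Fin n)
    (hii_lt : X i ⬝ᵥ ((Xᵀ * X)⁻¹ *ᵥ X i) < 1)
    (hinv' : IsUnit (Xᵀ * X - vecMulVec (X i) (X i)).det)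
    (xnew : Fin p → ℝ) :
    let yhat : (Fin p → ℝ) → ℝ := fun v =>
      v ⬝ᵥ ((Xᵀ * X - vecMulVec (X i) (X i))⁻¹ *ᵥ (Xᵀ *ᵥ Y - Y i • X i))
    let βhat : Fin p → ℝ := (Xᵀ * X)⁻¹ *ᵥ (Xᵀ *ᵥ Y)
    let hii : ℝ := X i ⬝ᵥ ((Xᵀ * X)⁻¹ *ᵥ X i)
    let hinew : ℝ := xnew ⬝ᵥ ((Xᵀ * X)⁻¹ *ᵥ X i)
    let u : ℝ := (Y i - X i ⬝ᵥ βhat) / (1 - hii)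
    yhat xnew + (Y i - yhat (X i)) = xnew ⬝ᵥ βhat + (1 - hinew) * u :=
  stmt_5_general n p X Y hinv i hii_lt xnew
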